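/- arXiv:1403.5290 — 4 statements merged into one kernel-verified Lean document; each statement's English description precedes it below -/
import Mathlib

section
/- Let α ∈ (0,π), β ∈ ℝ, kₐ ∈ ℝ, |v| ≥ 0, C_L, C_D ∈ ℝ, let (e₁,e₂,e₃) be the standard basis of ℝ³, set vₐ := |v| sin α cos β · e₁ + |v| sin α sin β · e₂ − |v| cos α · e₃, r(β) := −sin β · e₁ + cos β · e₂, F_L := kₐ |v| C_L · (r(β) × vₐ) and F_D := −kₐ |v| C_D · vₐ. Then F_L + F_D = −kₐ |v| · ( (C_D + C_L · cot α) · vₐ + (C_L / sin α) · |v| · e₃ ). -/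
/-!
Write `vₐ = |v| (sin α · u - cos α · e₃)` with `u = cos β e₁ + sin β e₂`. Since `r × u = -e₃` and
`r × e₃ = u`, the lift direction satisfies `sin α · (r × vₐ) = -cos α · vₐ - |v| e₃`, by
`sin² + cos² = 1` in `α` and in `β`. Dividing by `sin α ≠ 0` expresses `F_L` through `vₐ` and `e₃`.
-/

open Real RealInnerProductSpace

/-- Cross product on `ℝ³` (as `EuclideanSpace ℝ (Fin 3)`). -/
noncomputable def cross3 (a b : EuclideanSpace ℝ (Fin 3)) : EuclideanSpace ℝ (Fin 3) :=
  WithLp.toLp 2 ![a 1 * b 2 - a 2 * b 1, a 2 * b 0 - a 0 * b 2, a 0 * b 1 - a 1 * b 0]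

/-- Standard orthonormal basis of `ℝ³`. -/
noncomputable def e3 (i : Fin 3) : EuclideanSpace ℝ (Fin 3) := EuclideanSpace.single i 1

theorem cross3_eq_crossProduct (a b : EuclideanSpace ℝ (Fin 3)) :
    cross3 a b = WithLp.toLp 2 (crossProduct (WithLp.ofLp a) (WithLp.ofLp b)) := rfl

theorem cross3_sub_right (a b c : EuclideanSpace ℝ (Fin 3)) :
    cross3 a (b - c) = cross3 a b - cross3 a c := by
  simp only [cross3_eq_crossProduct, WithLp.ofLp_sub, map_sub, WithLp.toLp_sub]

theorem cross3_smul_right (t : ℝ) (a b : EuclideanSpace ℝ (Fin 3)) :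
    cross3 a (t • b) = t • cross3 a b := by
  simp only [cross3_eq_crossProduct, WithLp.ofLp_smul, map_smul, WithLp.toLp_smul]

theorem cross3_planar_e3_two (a b : ℝ) :
    cross3 (a • e3 0 + b • e3 1) (e3 2) = b • e3 0 - a • e3 1 := by
  ext i; fin_cases i <;> simp [cross3, e3]

theorem cross3_planar_planar (a b c d : ℝ) :
    cross3 (a • e3 0 + b • e3 1) (c • e3 0 + d • e3 1) = (a * d - b * c) • e3 2 := by
  ext i; fin_cases i <;> simp [cross3, e3]

theorem sin_smul_cross3_airVelocity (α β v : ℝ) :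
    sin α • cross3 ((-sin β) • e3 0 + cos β • e3 1)
        ((v * sin α * cos β) • e3 0 + (v * sin α * sin β) • e3 1 - (v * cos α) • e3 2) =
      -cos α • ((v * sin α * cos β) • e3 0 + (v * sin α * sin β) • e3 1 - (v * cos α) • e3 2)
        - v • e3 2 := by
  rw [cross3_sub_right, cross3_smul_right, cross3_planar_planar, cross3_planar_e3_two]
  linear_combination (norm := module)
    (-(v * sin α ^ 2) * sin_sq_add_cos_sq β - v * sin_sq_add_cos_sq α) • e3 2

theorem stmt1_general (α β ka vnorm CL CD : ℝ) (hα : α ∈ Set.Ioo 0 π)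
    (va r FL FD : EuclideanSpace ℝ (Fin 3))
    (hva : va = (vnorm * Real.sin α * Real.cos β) • e3 0
        + (vnorm * Real.sin α * Real.sin β) • e3 1
        - (vnorm * Real.cos α) • e3 2)
    (hr : r = (-Real.sin β) • e3 0 + Real.cos β • e3 1)
    (hFL : FL = (ka * vnorm * CL) • cross3 r va)
    (hFD : FD = -(ka * vnorm * CD) • va) :
    FL + FD = (-(ka * vnorm)) •
      ((CD + CL * (Real.cos α / Real.sin α)) • va + (CL / Real.sin α * vnorm) • e3 2) := by
  have hsin : sin α ≠ 0 := (sin_pos_of_pos_of_lt_pi hα.1 hα.2).ne'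
  have hcross : sin α • cross3 r va = -cos α • va - vnorm • e3 2 := by
    subst hva hr; exact sin_smul_cross3_airVelocity α β vnorm
  have hFL' : FL = (ka * vnorm * CL / sin α) • (-cos α • va - vnorm • e3 2) := by
    rw [hFL, ← hcross, smul_smul, div_mul_cancel₀ _ hsin]
  rw [hFL', hFD]
  module

/-- with `F_L = kₐ|v|C_L (r(β) × vₐ)` and `F_D = −kₐ|v|C_D vₐ`,
`F_L + F_D = −kₐ|v| ((C_D + C_L cot α) vₐ + (C_L/sin α)|v| e₃)`. -/
theorem stmt1 (α β ka vnorm CL CD : ℝ) (hα : α ∈ Set.Ioo 0 π) (hv : 0 ≤ vnorm)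
    (va r FL FD : EuclideanSpace ℝ (Fin 3))
    (hva : va = (vnorm * Real.sin α * Real.cos β) • e3 0
        + (vnorm * Real.sin α * Real.sin β) • e3 1
        - (vnorm * Real.cos α) • e3 2)
    (hr : r = (-Real.sin β) • e3 0 + Real.cos β • e3 1)
    (hFL : FL = (ka * vnorm * CL) • cross3 r va)
    (hFD : FD = -(ka * vnorm * CD) • va) :
    FL + FD = (-(ka * vnorm)) •
      ((CD + CL * (Real.cos α / Real.sin α)) • va + (CL / Real.sin α * vnorm) • e3 2) :=
  stmt1_general α β ka vnorm CL CD hα va r FL FD hva hr hFL hFD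
end

section
/- (Spherical equivalence, Proposition 1.) Let α ∈ (0,π), β ∈ ℝ, kₐ ∈ ℝ, |v| ≥ 0, T ∈ ℝ, and let C_D, C_L : (0,π) → ℝ satisfy C_D(α) + C_L(α) cot α = C_{D₀} for a constant C_{D₀}. With (e₁,e₂,e₃) the standard basis of ℝ³, vₐ := |v| sin α cos β e₁ + |v| sin α sin β e₂ − |v| cos α e₃, r(β) := −sin β e₁ + cos β e₂, Fₐ := kₐ|v|C_L(α)(r(β) × vₐ) − kₐ|v|C_D(α) vₐ, F_p := −kₐ C_{D₀} |v| vₐ, and T_p := T + kₐ|v|² C_L(α)/sin α, one has Fₐ − T·e₃ = F_p − T_p·e₃. Consequently the dynamics m v̇ = m g + Fₐ − T e₃ can be rewritten as m v̇ = m g + F_p − T_p e₃. -/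
open Real RealInnerProductSpace

/-! The lift `r(β) × vₐ` splits into a drag-like part along `vₐ` and a part along the thrust
axis `e₃`: `r(β) × vₐ = -cot α · vₐ - (|v| / sin α) e₃`. Under `C_D + C_L cot α = C_{D₀}` the
first part merges with the drag into the spherical drag `F_p`, and the second is absorbed into
the thrust, giving `T_p`. -/

noncomputable def airVelocity (V α β : ℝ) : EuclideanSpace ℝ (Fin 3) :=
  (V * sin α * cos β) • e3 0 + (V * sin α * sin β) • e3 1 - (V * cos α) • e3 2

noncomputable def liftDirection (β : ℝ) : EuclideanSpace ℝ (Fin 3) :=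
  (-sin β) • e3 0 + cos β • e3 1

theorem cross3_liftDirection_airVelocity (V α β : ℝ) (hα : sin α ≠ 0) :
    cross3 (liftDirection β) (airVelocity V α β)
      = -(cos α / sin α) • airVelocity V α β - (V / sin α) • e3 2 := by
  ext i
  fin_cases i <;> simp [cross3, e3, liftDirection, airVelocity] <;> field_simp
  linear_combination (-V * sin α ^ 2) * sin_sq_add_cos_sq β - V * sin_sq_add_cos_sq α

theorem stmt2_general (α β ka vnorm T CD0 : ℝ) (CD CL : ℝ → ℝ)
    (hα : α ∈ Set.Ioo 0 π)
    (hcoeff : ∀ a ∈ Set.Ioo (0:ℝ) π, CD a + CL a * (Real.cos a / Real.sin a) = CD0)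
    (va r Fa Fp : EuclideanSpace ℝ (Fin 3)) (Tp : ℝ)
    (hva : va = (vnorm * Real.sin α * Real.cos β) • e3 0
        + (vnorm * Real.sin α * Real.sin β) • e3 1
        - (vnorm * Real.cos α) • e3 2)
    (hr : r = (-Real.sin β) • e3 0 + Real.cos β • e3 1)
    (hFa : Fa = (ka * vnorm * CL α) • cross3 r va - (ka * vnorm * CD α) • va)
    (hFp : Fp = -(ka * CD0 * vnorm) • va)
    (hTp : Tp = T + ka * vnorm ^ 2 * CL α / Real.sin α) :
    Fa - T • e3 2 = Fp - Tp • e3 2 ∧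
      ∀ (m : ℝ) (g : EuclideanSpace ℝ (Fin 3)),
        m • g + Fa - T • e3 2 = m • g + Fp - Tp • e3 2 := by
  have hsin : sin α ≠ 0 := (sin_pos_of_pos_of_lt_pi hα.1 hα.2).ne'
  obtain rfl : va = airVelocity vnorm α β := hva
  obtain rfl : r = liftDirection β := hr
  have hforce : Fa - T • e3 2 = Fp - Tp • e3 2 := by
    rw [hFa, hFp, hTp, ← hcoeff α hα, cross3_liftDirection_airVelocity vnorm α β hsin]
    module
  exact ⟨hforce, fun m g => by rw [add_sub_assoc, add_sub_assoc, hforce]⟩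

/-- spherical equivalence, Proposition 1: if the aerodynamic coefficients
satisfy `C_D(α) + C_L(α) cot α = C_{D₀}` on `(0,π)`, then with
`Fₐ = kₐ|v|C_L(α)(r(β) × vₐ) − kₐ|v|C_D(α) vₐ`, `F_p = −kₐ C_{D₀} |v| vₐ`,
`T_p = T + kₐ|v|² C_L(α)/sin α`, one has `Fₐ − T e₃ = F_p − T_p e₃`, hence
`m g + Fₐ − T e₃ = m g + F_p − T_p e₃`. -/
theorem stmt2 (α β ka vnorm T CD0 : ℝ) (CD CL : ℝ → ℝ)
    (hα : α ∈ Set.Ioo 0 π) (hv : 0 ≤ vnorm)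
    (hcoeff : ∀ a ∈ Set.Ioo (0:ℝ) π, CD a + CL a * (Real.cos a / Real.sin a) = CD0)
    (va r Fa Fp : EuclideanSpace ℝ (Fin 3)) (Tp : ℝ)
    (hva : va = (vnorm * Real.sin α * Real.cos β) • e3 0
        + (vnorm * Real.sin α * Real.sin β) • e3 1
        - (vnorm * Real.cos α) • e3 2)
    (hr : r = (-Real.sin β) • e3 0 + Real.cos β • e3 1)
    (hFa : Fa = (ka * vnorm * CL α) • cross3 r va - (ka * vnorm * CD α) • va)
    (hFp : Fp = -(ka * CD0 * vnorm) • va)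
    (hTp : Tp = T + ka * vnorm ^ 2 * CL α / Real.sin α) :
    Fa - T • e3 2 = Fp - Tp • e3 2 ∧
      ∀ (m : ℝ) (g : EuclideanSpace ℝ (Fin 3)),
        m • g + Fa - T • e3 2 = m • g + Fp - Tp • e3 2 :=
  stmt2_general α β ka vnorm T CD0 CD CL hα hcoeff va r Fa Fp Tp hva hr hFa hFp hTp
end

section
/- Let k, k_r : ℝ → ℝ³ be differentiable with ‖k(t)‖ = ‖k_r(t)‖ = 1 for all t, and suppose k'(t) = ω(t) × k(t) and k_r'(t) = ω_r(t) × k_r(t) for functions ω, ω_r : ℝ → ℝ³. Then the function V₀(t) := 1 − ⟨k(t), k_r(t)⟩ satisfies V₀'(t) = ⟨ω_r(t) − ω(t), k(t) × k_r(t)⟩ for all t. -/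
/-! By the product rule `V₀' = -(⟨ω × k, k_r⟩ + ⟨k, ω_r × k_r⟩)`; the cyclic symmetry and the
antisymmetry of the scalar triple product turn both terms into multiples of `k × k_r`. -/

open Real RealInnerProductSpace

section cross3

variable (a b c : EuclideanSpace ℝ (Fin 3))

theorem cross3_anticomm : cross3 b a = -cross3 a b := by
  ext i
  fin_cases i <;>
    simp only [cross3, Fin.zero_eta, Fin.mk_one, Fin.reduceFinMk, Matrix.cons_val,
      Matrix.cons_val_zero, Matrix.cons_val_one, PiLp.neg_apply, neg_sub] <;>
    ring

theorem inner_cross3_left : ⟪cross3 a b, c⟫ = ⟪a, cross3 b c⟫ := by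
  simp only [cross3, PiLp.inner_apply, RCLike.inner_apply, conj_trivial, Fin.sum_univ_three,
    Matrix.cons_val_zero, Matrix.cons_val_one, Matrix.cons_val_two,
    Matrix.head_cons, Matrix.tail_cons]
  ring

end cross3

theorem stmt8_general (k kr ω ωr : ℝ → EuclideanSpace ℝ (Fin 3))
    (hk : ∀ t, HasDerivAt k (cross3 (ω t) (k t)) t)
    (hkr : ∀ t, HasDerivAt kr (cross3 (ωr t) (kr t)) t)
    (V₀ : ℝ → ℝ) (hV₀ : ∀ t, V₀ t = 1 - ⟪k t, kr t⟫) :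
    ∀ t, HasDerivAt V₀ (⟪ωr t - ω t, cross3 (k t) (kr t)⟫) t := by
  intro t
  rw [show V₀ = fun s => 1 - ⟪k s, kr s⟫ from funext hV₀]
  refine ((hasDerivAt_const t 1).sub ((hk t).inner ℝ (hkr t))).congr_deriv ?_
  rw [inner_cross3_left, real_inner_comm _ (k t), inner_cross3_left, cross3_anticomm,
    inner_neg_right, inner_sub_left]
  ring

/-- if `k' = ω × k` and `k_r' = ω_r × k_r` with `k, k_r` unit curves, then
`V₀ := 1 − ⟨k, k_r⟩` satisfies `V₀' = ⟨ω_r − ω, k × k_r⟩`. -/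
theorem stmt8 (k kr ω ωr : ℝ → EuclideanSpace ℝ (Fin 3))
    (hk : ∀ t, HasDerivAt k (cross3 (ω t) (k t)) t)
    (hkr : ∀ t, HasDerivAt kr (cross3 (ωr t) (kr t)) t)
    (hkunit : ∀ t, ‖k t‖ = 1) (hkrunit : ∀ t, ‖kr t‖ = 1)
    (V₀ : ℝ → ℝ) (hV₀ : ∀ t, V₀ t = 1 - ⟪k t, kr t⟫) :
    ∀ t, HasDerivAt V₀ (⟪ωr t - ω t, cross3 (k t) (kr t)⟫) t :=
  stmt8_general k kr ω ωr hk hkr V₀ hV₀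
end

section
/- Let k, k_r ∈ ℝ³ with ‖k‖ = ‖k_r‖ = 1 and ⟨k, k_r⟩ ≠ −1, let γ, m > 0, let F ∈ ℝ³ with γ ≥ ‖F‖, and define V₁ := (γ²/2)·‖k × k_r‖²/(1 + ⟨k, k_r⟩)² and ε := (1/m)·‖F‖·(k × (k_r × k)). Then V₁ ≥ m²‖ε‖²/8, i.e. ‖ε‖ ≤ √(8 V₁)/m. -/
open Real RealInnerProductSpace

section Cross3

variable (a b c d : EuclideanSpace ℝ (Fin 3))

theorem cross3_eq_toLp_crossProduct :
    cross3 a b = WithLp.toLp 2 (crossProduct (WithLp.ofLp a) (WithLp.ofLp b)) := by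
  rw [cross_apply]
  rfl

theorem real_inner_eq_dotProduct_ofLp {ι : Type*} [Fintype ι] (x y : EuclideanSpace ℝ ι) :
    ⟪x, y⟫ = WithLp.ofLp x ⬝ᵥ WithLp.ofLp y := by
  rw [EuclideanSpace.inner_eq_star_dotProduct, star_trivial, dotProduct_comm]

theorem inner_cross3_cross3 :
    ⟪cross3 a b, cross3 c d⟫ = ⟪a, c⟫ * ⟪b, d⟫ - ⟪a, d⟫ * ⟪b, c⟫ := by
  simp only [real_inner_eq_dotProduct_ofLp, cross3_eq_toLp_crossProduct, cross_dot_cross]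

theorem inner_cross3_self : ⟪a, cross3 b a⟫ = 0 := by
  rw [real_inner_eq_dotProduct_ofLp, cross3_eq_toLp_crossProduct, dot_cross_self]

theorem norm_cross3_sq : ‖cross3 a b‖ ^ 2 = ‖a‖ ^ 2 * ‖b‖ ^ 2 - ⟪a, b⟫ ^ 2 := by
  rw [← real_inner_self_eq_norm_sq, inner_cross3_cross3, real_inner_self_eq_norm_sq,
    real_inner_self_eq_norm_sq, real_inner_comm b a]
  ring

theorem norm_cross3_cross3_sq :
    ‖cross3 a (cross3 b a)‖ ^ 2 = ‖a‖ ^ 2 * (‖a‖ ^ 2 * ‖b‖ ^ 2 - ⟪a, b⟫ ^ 2) := by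
  rw [norm_cross3_sq, inner_cross3_self, norm_cross3_sq, real_inner_comm b a]
  ring

end Cross3

theorem one_sub_sq_div_four_le {c : ℝ} (hc₁ : c ≤ 1) (hc₂ : -1 < c) :
    (1 - c ^ 2) / 4 ≤ (1 - c ^ 2) / (1 + c) ^ 2 :=
  div_le_div_of_nonneg_left (by nlinarith) (pow_pos (by linarith) 2) (by nlinarith)

theorem stmt15_general (k kr F : EuclideanSpace ℝ (Fin 3)) (γ m : ℝ)
    (hk : ‖k‖ = 1) (hkr : ‖kr‖ = 1) (h : ⟪k, kr⟫ ≠ -1)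
    (hm : 0 < m) (hγF : ‖F‖ ≤ γ)
    (V₁ : ℝ) (hV₁ : V₁ = γ ^ 2 / 2 * (‖cross3 k kr‖ ^ 2 / (1 + ⟪k, kr⟫) ^ 2))
    (ε : EuclideanSpace ℝ (Fin 3)) (hε : ε = (1 / m * ‖F‖) • cross3 k (cross3 kr k)) :
    m ^ 2 * ‖ε‖ ^ 2 / 8 ≤ V₁ ∧ ‖ε‖ ≤ Real.sqrt (8 * V₁) / m := by
  have hc₁ : ⟪k, kr⟫ ≤ 1 := by simpa [hk, hkr] using real_inner_le_norm k kr
  have hc₂ : -1 < ⟪k, kr⟫ := (neg_one_le_real_inner_of_norm_eq_one hk hkr).lt_of_ne h.symm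
  have hε_sq : m ^ 2 * ‖ε‖ ^ 2 = ‖F‖ ^ 2 * (1 - ⟪k, kr⟫ ^ 2) := by
    rw [hε, norm_smul, mul_pow, norm_cross3_cross3_sq, hk, hkr, Real.norm_of_nonneg (by positivity)]
    field_simp
  have hF_sq : ‖F‖ ^ 2 ≤ γ ^ 2 := pow_le_pow_left₀ (norm_nonneg F) hγF 2
  have hc_sq : 0 ≤ 1 - ⟪k, kr⟫ ^ 2 := by nlinarith
  have hbound : m ^ 2 * ‖ε‖ ^ 2 / 8 ≤ V₁ :=
    calc m ^ 2 * ‖ε‖ ^ 2 / 8 = ‖F‖ ^ 2 / 2 * ((1 - ⟪k, kr⟫ ^ 2) / 4) := by rw [hε_sq]; ring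
      _ ≤ γ ^ 2 / 2 * ((1 - ⟪k, kr⟫ ^ 2) / 4) := by gcongr
      _ ≤ γ ^ 2 / 2 * ((1 - ⟪k, kr⟫ ^ 2) / (1 + ⟪k, kr⟫) ^ 2) := 
        mul_le_mul_of_nonneg_left (one_sub_sq_div_four_le hc₁ hc₂) (by positivity)
      _ = V₁ := by rw [hV₁, norm_cross3_sq, hk, hkr]; ring
  have hV₁_nonneg : 0 ≤ V₁ := (by positivity : (0 : ℝ) ≤ m ^ 2 * ‖ε‖ ^ 2 / 8).trans hbound
  refine ⟨hbound, ?_⟩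
  rw [le_div_iff₀ hm, Real.le_sqrt (by positivity) (by positivity)]
  linarith

/-- for unit vectors `k, k_r` with `⟨k,k_r⟩ ≠ −1`, gains `γ, m > 0` with
`γ ≥ ‖F‖`, the Lyapunov value `V₁ = (γ²/2)‖k × k_r‖²/(1 + ⟨k,k_r⟩)²` dominates the
perturbation `ε = (1/m)‖F‖ (k × (k_r × k))`: `V₁ ≥ m²‖ε‖²/8`, i.e. `‖ε‖ ≤ √(8V₁)/m`. -/
theorem stmt15 (k kr F : EuclideanSpace ℝ (Fin 3)) (γ m : ℝ)
    (hk : ‖k‖ = 1) (hkr : ‖kr‖ = 1) (h : ⟪k, kr⟫ ≠ -1)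
    (hγ : 0 < γ) (hm : 0 < m) (hγF : ‖F‖ ≤ γ)
    (V₁ : ℝ) (hV₁ : V₁ = γ ^ 2 / 2 * (‖cross3 k kr‖ ^ 2 / (1 + ⟪k, kr⟫) ^ 2))
    (ε : EuclideanSpace ℝ (Fin 3)) (hε : ε = (1 / m * ‖F‖) • cross3 k (cross3 kr k)) :
    m ^ 2 * ‖ε‖ ^ 2 / 8 ≤ V₁ ∧ ‖ε‖ ≤ Real.sqrt (8 * V₁) / m :=
  stmt15_general k kr F γ m hk hkr h hm hγF V₁ hV₁ ε hε
end
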